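/- For the ODE −w² + 2(wz − 1)w' − z²w'² − (4z + wz²)w'' = 0, rewritten on the region 4z + wz² ≠ 0 in the normalized form w'' + Bw'² + Cw' + D = 0 with A = 0, B = z²/(4z + wz²) = z/(4 + wz), C = −2(wz − 1)/(z(4 + wz)), D = w²/(z(4 + wz)), the Lie linearization invariants satisfy Ψ₁ = 54z/(4 + wz)³ and Ψ₂ = −72(−2 + wz)/(z(4 + wz)³); in particular the equation is not linearizable by point transformations. -/

import Mathlib

/-!
With `A = 0` the invariants involve only a few first and second partial derivatives of the
rational coefficients `Bc`, `Cc`, `Dc`, whose denominators are powers of `z` and `s = 4 + wz`.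
The first partials come from the quotient rule; their closed forms hold on the open set
`s ≠ 0`, so they can be differentiated once more. Substituting and clearing denominators gives
both invariants; at `(z, w) = (1, 0)` the first one equals `27/32 ≠ 0`.
-/

/-- Partial derivative in the first (`z`) slot. -/
noncomputable def pz (f : ℝ → ℝ → ℝ) : ℝ → ℝ → ℝ :=
  fun z w => deriv (fun z' => f z' w) z

/-- Partial derivative in the second (`w`) slot. -/
noncomputable def pw (f : ℝ → ℝ → ℝ) : ℝ → ℝ → ℝ :=
  fun z w => deriv (fun w' => f z w') w

/-- Lie's first linearization invariant
`Ψ₁ = 3A_{zz} − 2B_{zw} + C_{ww} − 3(CA)_z + 3(DA)_w + (B²)_z + 3A·D_w − B·C_w`. -/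
noncomputable def Ψ₁ (A B C D : ℝ → ℝ → ℝ) : ℝ → ℝ → ℝ := fun z w =>
  3 * pz (pz A) z w - 2 * pw (pz B) z w + pw (pw C) z w
    - 3 * pz (fun z w => C z w * A z w) z w + 3 * pw (fun z w => D z w * A z w) z w
    + pz (fun z w => (B z w) ^ 2) z w + 3 * A z w * pw D z w - B z w * pw C z w

/-- Lie's second linearization invariant
`Ψ₂ = 3D_{ww} − 2C_{zw} + B_{zz} − 3(DA)_z + 3(DB)_w − (C²)_w − 3D·A_z + C·B_z`. -/
noncomputable def Ψ₂ (A B C D : ℝ → ℝ → ℝ) : ℝ → ℝ → ℝ := fun z w =>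
  3 * pw (pw D) z w - 2 * pw (pz C) z w + pz (pz B) z w
    - 3 * pz (fun z w => D z w * A z w) z w + 3 * pw (fun z w => D z w * B z w) z w
    - pw (fun z w => (C z w) ^ 2) z w - 3 * D z w * pz A z w + C z w * pz B z w

/-- Coefficients of the normalized form of the `L_{2,1}`-reduced ODE. -/
noncomputable def Bc : ℝ → ℝ → ℝ := fun z w => z / (4 + w * z)
noncomputable def Cc : ℝ → ℝ → ℝ := fun z w => -2 * (w * z - 1) / (z * (4 + w * z))
noncomputable def Dc : ℝ → ℝ → ℝ := fun z w => w ^ 2 / (z * (4 + w * z))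

open Filter Topology

variable {z w : ℝ}

lemma HasDerivAt.fun_sq {g : ℝ → ℝ} {g' x : ℝ} (h : HasDerivAt g g' x) :
    HasDerivAt (fun y => g y ^ 2) (2 * g x * g') x := by
  simpa using h.fun_pow 2

section PartialDerivatives

variable {f : ℝ → ℝ → ℝ} {f' : ℝ}

@[simp] lemma pz_zero : pz (fun _ _ => 0) = fun _ _ => 0 := by
  funext z w; simp [pz]

@[simp] lemma pw_zero : pw (fun _ _ => 0) = fun _ _ => 0 := by
  funext z w; simp [pw]

lemma pz_eq_of_hasDerivAt (h : HasDerivAt (fun z' => f z' w) f' z) : pz f z w = f' :=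
  h.deriv

lemma pw_eq_of_hasDerivAt (h : HasDerivAt (fun w' => f z w') f' w) : pw f z w = f' :=
  h.deriv

end PartialDerivatives

lemma Ψ₁_zero (B C D : ℝ → ℝ → ℝ) :
    Ψ₁ (fun _ _ => 0) B C D z w = -2 * pw (pz B) z w + pw (pw C) z w
      + pz (fun z w => B z w ^ 2) z w - B z w * pw C z w := by
  simp only [Ψ₁, pz_zero, pw_zero, mul_zero, zero_mul]
  ring

lemma Ψ₂_zero (B C D : ℝ → ℝ → ℝ) :
    Ψ₂ (fun _ _ => 0) B C D z w = 3 * pw (pw D) z w - 2 * pw (pz C) z w + pz (pz B) z w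
      + 3 * pw (fun z w => D z w * B z w) z w - pw (fun z w => C z w ^ 2) z w
      + C z w * pz B z w := by
  simp only [Ψ₂, pz_zero, mul_zero]
  ring

lemma hasDerivAt_four_add_mul_z (z w : ℝ) : HasDerivAt (fun z' => 4 + w * z') w z := by
  simpa using ((hasDerivAt_id' z).const_mul w).const_add 4

lemma hasDerivAt_four_add_mul_w (z w : ℝ) : HasDerivAt (fun w' => 4 + w' * z) z w :=
  (hasDerivAt_mul_const z).const_add 4

lemma eventually_four_add_mul_ne_zero_z (hs : 4 + w * z ≠ 0) :
    ∀ᶠ z' in 𝓝 z, 4 + w * z' ≠ 0 :=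
  (hasDerivAt_four_add_mul_z z w).continuousAt.eventually_ne hs

lemma eventually_four_add_mul_ne_zero_w (hs : 4 + w * z ≠ 0) :
    ∀ᶠ w' in 𝓝 w, 4 + w' * z ≠ 0 :=
  (hasDerivAt_four_add_mul_w z w).continuousAt.eventually_ne hs

lemma hasDerivAt_Bc_z (hs : 4 + w * z ≠ 0) :
    HasDerivAt (fun z' => Bc z' w) (4 / (4 + w * z) ^ 2) z :=
  ((hasDerivAt_id' z).fun_div (hasDerivAt_four_add_mul_z z w) hs).congr_deriv
    (by field_simp; ring)

lemma hasDerivAt_Bc_w (hs : 4 + w * z ≠ 0) :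
    HasDerivAt (fun w' => Bc z w') (-z ^ 2 / (4 + w * z) ^ 2) w :=
  ((hasDerivAt_const w z).fun_div (hasDerivAt_four_add_mul_w z w) hs).congr_deriv
    (by field_simp; ring)

lemma hasDerivAt_Cc_z (hz : z ≠ 0) (hs : 4 + w * z ≠ 0) :
    HasDerivAt (fun z' => Cc z' w)
      ((2 * w ^ 2 * z ^ 2 - 4 * w * z - 8) / (z ^ 2 * (4 + w * z) ^ 2)) z :=
  ((((hasDerivAt_id' z).const_mul w).sub_const 1).const_mul (-2) |>.fun_div
    ((hasDerivAt_id' z).fun_mul (hasDerivAt_four_add_mul_z z w)) (mul_ne_zero hz hs)).congr_deriv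
    (by field_simp; ring)

lemma hasDerivAt_Cc_w (hz : z ≠ 0) (hs : 4 + w * z ≠ 0) :
    HasDerivAt (fun w' => Cc z w') (-10 / (4 + w * z) ^ 2) w :=
  (((hasDerivAt_mul_const z).sub_const 1).const_mul (-2) |>.fun_div
    ((hasDerivAt_four_add_mul_w z w).const_mul z) (mul_ne_zero hz hs)).congr_deriv
    (by field_simp; ring)

lemma hasDerivAt_Dc_w (hz : z ≠ 0) (hs : 4 + w * z ≠ 0) :
    HasDerivAt (fun w' => Dc z w') ((8 * w + w ^ 2 * z) / (z * (4 + w * z) ^ 2)) w :=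
  (((hasDerivAt_id' w).fun_sq).fun_div ((hasDerivAt_four_add_mul_w z w).const_mul z)
    (mul_ne_zero hz hs)).congr_deriv (by field_simp; ring)

lemma hasDerivAt_pz_Bc_z (hs : 4 + w * z ≠ 0) :
    HasDerivAt (fun z' => pz Bc z' w) (-8 * w / (4 + w * z) ^ 3) z := by
  have hloc : (fun z' => pz Bc z' w) =ᶠ[𝓝 z] fun z' => 4 / (4 + w * z') ^ 2 :=
    (eventually_four_add_mul_ne_zero_z hs).mono fun _ hs' => (hasDerivAt_Bc_z hs').deriv
  refine (((hasDerivAt_const z 4).fun_div (hasDerivAt_four_add_mul_z z w).fun_sq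
    (pow_ne_zero 2 hs)).congr_deriv ?_).congr_of_eventuallyEq hloc
  field_simp; ring

lemma hasDerivAt_pz_Bc_w (hs : 4 + w * z ≠ 0) :
    HasDerivAt (fun w' => pz Bc z w') (-8 * z / (4 + w * z) ^ 3) w := by
  have hloc : (fun w' => pz Bc z w') =ᶠ[𝓝 w] fun w' => 4 / (4 + w' * z) ^ 2 :=
    (eventually_four_add_mul_ne_zero_w hs).mono fun _ hs' => (hasDerivAt_Bc_z hs').deriv
  refine (((hasDerivAt_const w 4).fun_div (hasDerivAt_four_add_mul_w z w).fun_sq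
    (pow_ne_zero 2 hs)).congr_deriv ?_).congr_of_eventuallyEq hloc
  field_simp; ring

lemma hasDerivAt_pw_Cc_w (hz : z ≠ 0) (hs : 4 + w * z ≠ 0) :
    HasDerivAt (fun w' => pw Cc z w') (20 * z / (4 + w * z) ^ 3) w := by
  have hloc : (fun w' => pw Cc z w') =ᶠ[𝓝 w] fun w' => -10 / (4 + w' * z) ^ 2 :=
    (eventually_four_add_mul_ne_zero_w hs).mono fun _ hs' => (hasDerivAt_Cc_w hz hs').deriv
  refine (((hasDerivAt_const w (-10)).fun_div (hasDerivAt_four_add_mul_w z w).fun_sq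
    (pow_ne_zero 2 hs)).congr_deriv ?_).congr_of_eventuallyEq hloc
  field_simp; ring

lemma hasDerivAt_pz_Cc_w (hz : z ≠ 0) (hs : 4 + w * z ≠ 0) :
    HasDerivAt (fun w' => pz Cc z w') (20 * w / (4 + w * z) ^ 3) w := by
  have hloc : (fun w' => pz Cc z w') =ᶠ[𝓝 w]
      fun w' => (2 * w' ^ 2 * z ^ 2 - 4 * w' * z - 8) / (z ^ 2 * (4 + w' * z) ^ 2) :=
    (eventually_four_add_mul_ne_zero_w hs).mono fun _ hs' => (hasDerivAt_Cc_z hz hs').deriv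
  have hnum := ((((hasDerivAt_id' w).fun_sq.const_mul 2).mul_const (z ^ 2)).fun_sub
    (((hasDerivAt_id' w).const_mul 4).mul_const z)).sub_const 8
  have hden := (hasDerivAt_four_add_mul_w z w).fun_sq.const_mul (z ^ 2)
  refine ((hnum.fun_div hden (by positivity)).congr_deriv ?_).congr_of_eventuallyEq hloc
  field_simp; ring

lemma hasDerivAt_pw_Dc_w (hz : z ≠ 0) (hs : 4 + w * z ≠ 0) :
    HasDerivAt (fun w' => pw Dc z w') (32 / (z * (4 + w * z) ^ 3)) w := by
  have hloc : (fun w' => pw Dc z w') =ᶠ[𝓝 w]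
      fun w' => (8 * w' + w' ^ 2 * z) / (z * (4 + w' * z) ^ 2) :=
    (eventually_four_add_mul_ne_zero_w hs).mono fun _ hs' => (hasDerivAt_Dc_w hz hs').deriv
  have hnum := ((hasDerivAt_id' w).const_mul 8).fun_add ((hasDerivAt_id' w).fun_sq.mul_const z)
  have hden := (hasDerivAt_four_add_mul_w z w).fun_sq.const_mul z
  refine ((hnum.fun_div hden (by positivity)).congr_deriv ?_).congr_of_eventuallyEq hloc
  field_simp; ring

lemma Ψ₁_zero_Bc_Cc_Dc (hz : z ≠ 0) (hs : 4 + w * z ≠ 0) :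
    Ψ₁ (fun _ _ => 0) Bc Cc Dc z w = 54 * z / (4 + w * z) ^ 3 := by
  rw [Ψ₁_zero, pw_eq_of_hasDerivAt (hasDerivAt_pz_Bc_w hs),
    pw_eq_of_hasDerivAt (hasDerivAt_pw_Cc_w hz hs),
    pz_eq_of_hasDerivAt ((hasDerivAt_Bc_z hs).fun_sq),
    pw_eq_of_hasDerivAt (hasDerivAt_Cc_w hz hs), Bc]
  field_simp
  ring

lemma Ψ₂_zero_Bc_Cc_Dc (hz : z ≠ 0) (hs : 4 + w * z ≠ 0) :
    Ψ₂ (fun _ _ => 0) Bc Cc Dc z w = -72 * (-2 + w * z) / (z * (4 + w * z) ^ 3) := by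
  rw [Ψ₂_zero, pw_eq_of_hasDerivAt (hasDerivAt_pw_Dc_w hz hs),
    pw_eq_of_hasDerivAt (hasDerivAt_pz_Cc_w hz hs),
    pz_eq_of_hasDerivAt (hasDerivAt_pz_Bc_z hs),
    pw_eq_of_hasDerivAt ((hasDerivAt_Dc_w hz hs).fun_mul (hasDerivAt_Bc_w hs)),
    pw_eq_of_hasDerivAt ((hasDerivAt_Cc_w hz hs).fun_sq),
    pz_eq_of_hasDerivAt (hasDerivAt_Bc_z hs), Bc, Cc, Dc]
  field_simp
  ring

theorem linearization_test_L21 :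
    (∀ z w : ℝ, z ≠ 0 → 4 + w * z ≠ 0 →
        Ψ₁ (fun _ _ => 0) Bc Cc Dc z w = 54 * z / (4 + w * z) ^ 3 ∧
        Ψ₂ (fun _ _ => 0) Bc Cc Dc z w
          = -72 * (-2 + w * z) / (z * (4 + w * z) ^ 3)) ∧
      ¬ (∀ z w : ℝ, z ≠ 0 → 4 + w * z ≠ 0 →
          Ψ₁ (fun _ _ => 0) Bc Cc Dc z w = 0 ∧
          Ψ₂ (fun _ _ => 0) Bc Cc Dc z w = 0) := by
  refine ⟨fun z w hz hs => ⟨Ψ₁_zero_Bc_Cc_Dc hz hs, Ψ₂_zero_Bc_Cc_Dc hz hs⟩,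
    fun h => ?_⟩
  have hs : (4 : ℝ) + 0 * 1 ≠ 0 := by norm_num
  have h₁ := (h 1 0 one_ne_zero hs).1
  rw [Ψ₁_zero_Bc_Cc_Dc one_ne_zero hs] at h₁
  norm_num at h₁
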